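/- (Halfway Lemma) Let N be a complete Riemannian manifold and x0 ∈ N. Then there exists an ordered set of independent generators {g_1, g_2, g_3, ...} of π₁(N,x0) with minimal representative geodesic loops γ_k of lengths d_k such that d_N(γ_k(0), γ_k(d_k/2)) = d_k/2 for every k. If π₁(N,x0) is infinitely generated, this is an infinite sequence of such generators. -/

import Mathlib

open Metric MeasureTheory Filter ENNReal
open scoped Manifold

/-- `γ` is a unit-speed minimal geodesic on the interval `[a,b]`:
it realizes distances there. -/
def IsMinGeodesicOn {M : Type*} [MetricSpace M] (γ : ℝ → M) (a b : ℝ) : Prop :=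
  ∀ s ∈ Set.Icc a b, ∀ t ∈ Set.Icc a b, dist (γ s) (γ t) = |s - t|

/-- `(M,d)` is a geodesic metric space: any two points are joined by a minimal geodesic.
This holds for the distance of any complete Riemannian manifold. -/
def IsGeodesicMetricSpace (M : Type*) [MetricSpace M] : Prop :=
  ∀ x y : M, ∃ γ : ℝ → M, γ 0 = x ∧ γ (dist x y) = y ∧ IsMinGeodesicOn γ 0 (dist x y)

/-- The length of a path in a metric space, as its total variation. -/
noncomputable def pathELength {X : Type*} [MetricSpace X] {x y : X} (p : Path x y) : ℝ≥0∞ :=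
  eVariationOn p Set.univ

attribute [local instance] Path.Homotopic.setoid

/-- The homotopy class of a loop, as an element of the fundamental group. -/
noncomputable def loopClass {X : Type*} [TopologicalSpace X] {x : X} (p : Path x x) :
    FundamentalGroup X x :=
  FundamentalGroup.fromArrow
    (show FundamentalGroupoid.mk x ⟶ FundamentalGroupoid.mk x from ⟦p⟧)

/-- The universal (metric) cover of a pointed metric space `(N, x0)`, together with its
deck transformation action by the fundamental group `π₁(N, x0)`.  The covering projection
is a local isometry, so that the distance on the cover is the lifted (Riemannian)
distance; the deck transformations act freely and transitively on fibers, by isometries,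
and `deck g (basept)` is the endpoint of the lift starting at `basept` of any loop
representing `g` (monodromy). -/
structure UniversalCoverSetup (N : Type) [MetricSpace N] (x0 : N) where
  cover : Type
  covMetric : MetricSpace cover
  proj : cover → N
  basept : cover
  proj_base : proj basept = x0
  covering : IsCoveringMap proj
  simplyConnected : SimplyConnectedSpace cover
  complete : CompleteSpace cover
  geodesic : IsGeodesicMetricSpace cover
  locIsom : ∀ x : cover, ∃ ε > (0 : ℝ), ∀ y ∈ Metric.ball x ε, ∀ z ∈ Metric.ball x ε,
    dist (proj y) (proj z) = dist y z
  deck : FundamentalGroup N x0 →* (cover ≃ᵢ cover)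
  deck_proj : ∀ (g : FundamentalGroup N x0) (x : cover), proj (deck g x) = proj x
  deck_free : ∀ (g : FundamentalGroup N x0) (x : cover), deck g x = x → g = 1
  deck_transitive : ∀ x y : cover, proj x = proj y → ∃ g : FundamentalGroup N x0, deck g x = y
  monodromy : ∀ (g : FundamentalGroup N x0) (q : Path basept (deck g basept)),
    loopClass ((q.map covering.continuous).cast proj_base.symm
      (((deck_proj g basept).trans proj_base).symm)) = g

attribute [instance] UniversalCoverSetup.covMetric

namespace UniversalCoverSetup

variable {N : Type} [MetricSpace N] {x0 : N}

/-- The length `d_Ñ(x̃0, g·x̃0)` associated to an element `g` of the fundamental group: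
the length of a minimal representative geodesic loop of `g`. -/
noncomputable def len (S : UniversalCoverSetup N x0) (g : FundamentalGroup N x0) : ℝ :=
  dist S.basept (S.deck g S.basept)

/-- `γt` is (the lift of) a minimal representative geodesic loop of `g`: a minimal
geodesic in the universal cover from `x̃0` to `g·x̃0`, parametrized by arclength. -/
def IsMinRepLift (S : UniversalCoverSetup N x0) (g : FundamentalGroup N x0)
    (γt : ℝ → S.cover) : Prop :=
  γt 0 = S.basept ∧ γt (S.len g) = S.deck g S.basept ∧ IsMinGeodesicOn γt 0 (S.len g)

end UniversalCoverSetup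

/-!
Choose the generators greedily: `g_k` is a shortest element, for `ℓ g = d(x̃0, g x̃0)`, outside
the subgroup generated by `g_1, …, g_{k-1}`. Such an element exists because the universal cover
is proper (a complete, locally compact geodesic space), so only finitely many deck translates of
`x̃0` lie in a ball. If the midpoint `m` of a minimal geodesic from `x̃0` to `g x̃0` projected to a
point at distance `e < d/2` from `x0`, lifting a shortest path would give `u` over `π m` with
`d(x̃0, u) ≤ e`; the deck transformation `a` with `a u = m` then splits `g = a · (a⁻¹ g)` into
two elements shorter than `g`, one of which lies outside the subgroup.
-/

open Set Topology

section Geodesics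

variable {X : Type*} [MetricSpace X]

theorem dist_le_mul_sub_of_eventually_right {f : ℝ → X} {a b K : ℝ}
    (hf : ContinuousOn f (Icc a b))
    (hloc : ∀ u ∈ Ico a b, ∀ᶠ t in 𝓝[>] u, dist (f u) (f t) ≤ K * (t - u)) :
    ∀ t ∈ Icc a b, dist (f a) (f t) ≤ K * (t - a) := by
  refine image_le_of_liminf_slope_right_le_deriv_boundary (B' := fun _ => K)
    ((continuous_const.dist continuous_id).comp_continuousOn hf) (by simp) (by fun_prop)
    (fun u _ => ?_) fun u hu r hr => ?_
  · simpa using ((hasDerivAt_id u).sub_const a).const_mul K |>.hasDerivWithinAt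
  refine (((hloc u hu).and self_mem_nhdsWithin).mono fun t ⟨ht, hut⟩ => ?_).frequently
  have hut : 0 < t - u := sub_pos.2 hut
  calc slope (fun t => dist (f a) (f t)) u t
      = (dist (f a) (f t) - dist (f a) (f u)) / (t - u) := by
        rw [slope_def_field]
    _ ≤ dist (f u) (f t) / (t - u) := by
        gcongr; linarith [dist_triangle (f a) (f u) (f t)]
    _ ≤ K := by rwa [div_le_iff₀ hut]
    _ < r := hr

theorem IsMinGeodesicOn.continuousOn {γ : ℝ → X} {a b : ℝ} (h : IsMinGeodesicOn γ a b) :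
    ContinuousOn γ (Icc a b) :=
  (LipschitzOnWith.of_dist_le_mul (K := 1) fun s hs t ht => by
    simp [h s hs t ht, Real.dist_eq]).continuousOn

namespace IsGeodesicMetricSpace

variable (h : IsGeodesicMetricSpace X)
include h

theorem exists_dist_le_dist_le {x z : X} {r s : ℝ} (hr : 0 ≤ r) (hs : 0 ≤ s)
    (hz : dist x z ≤ r + s) : ∃ w, dist x w ≤ r ∧ dist w z ≤ s := by
  rcases le_or_gt (dist x z) r with hxz | hxz
  · exact ⟨z, hxz, by rwa [dist_self]⟩
  obtain ⟨γ, hγ0, hγ1, hγ⟩ := h x z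
  have hr' : r ∈ Icc 0 (dist x z) := ⟨hr, hxz.le⟩
  refine ⟨γ r, ?_, ?_⟩
  · rw [← hγ0, hγ 0 ⟨le_rfl, dist_nonneg⟩ r hr', zero_sub, abs_neg, abs_of_nonneg hr]
  · conv_lhs => rw [← hγ1]
    rw [hγ r hr' _ ⟨dist_nonneg, le_rfl⟩, abs_of_nonpos (by linarith)]
    linarith

theorem closedBall_add_subset_cthickening {x : X} {r s : ℝ} (hr : 0 ≤ r) (hs : 0 ≤ s) :
    closedBall x (r + s) ⊆ cthickening s (closedBall x r) := fun z hz => by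
  obtain ⟨w, hw, hwz⟩ := h.exists_dist_le_dist_le hr hs (mem_closedBall'.1 hz)
  exact mem_cthickening_of_dist_le z w s _ (mem_closedBall'.2 hw) (by rwa [dist_comm])

theorem exists_isCompact_closedBall_add [LocallyCompactSpace X] {x : X} {r : ℝ} (hr : 0 ≤ r)
    (hc : IsCompact (closedBall x r)) : ∃ δ > 0, IsCompact (closedBall x (r + δ)) := by
  obtain ⟨δ, hδ, hK⟩ := hc.exists_isCompact_cthickening
  exact ⟨δ, hδ, hK.of_isClosed_subset isClosed_closedBall
    (h.closedBall_add_subset_cthickening hr hδ.le)⟩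

theorem isCompact_closedBall_of_forall_lt [CompleteSpace X] {x : X} {r : ℝ} (hr : 0 < r)
    (hlt : ∀ r' < r, IsCompact (closedBall x r')) : IsCompact (closedBall x r) := by
  refine TotallyBounded.isCompact_of_isClosed (totallyBounded_iff.2 fun ε hε => ?_)
    isClosed_closedBall
  set η := min r (ε / 2)
  have hη : 0 < η := lt_min hr (half_pos hε)
  obtain ⟨t, ht, hcover⟩ :=
    totallyBounded_iff.1 (hlt (r - η) (by linarith)).totallyBounded (ε / 2) (half_pos hε)
  refine ⟨t, ht, fun z hz => ?_⟩
  obtain ⟨w, hw, hwz⟩ := h.exists_dist_le_dist_le (r := r - η) (s := η)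
    (by linarith [min_le_left r (ε / 2)]) hη.le (by linarith [mem_closedBall'.1 hz])
  obtain ⟨y, hy, hwy⟩ := mem_iUnion₂.1 (hcover (mem_closedBall'.2 hw))
  refine mem_iUnion₂.2 ⟨y, hy, ?_⟩
  rw [mem_ball] at hwy ⊢
  linarith [dist_triangle z w y, min_le_right r (ε / 2), dist_comm w z]

theorem properSpace [CompleteSpace X] [WeaklyLocallyCompactSpace X] : ProperSpace X := by
  refine ⟨fun x r => ?_⟩
  by_contra hr
  set A := {ρ | IsCompact (closedBall x ρ)}
  have hmono : ∀ ⦃ρ ρ'⦄, ρ' ≤ ρ → ρ ∈ A → ρ' ∈ A := fun _ _ hle hρ =>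
    hρ.of_isClosed_subset isClosed_closedBall (closedBall_subset_closedBall hle)
  have h0 : (0 : ℝ) ∈ A := by simp [A, closedBall_zero]
  have hbdd : BddAbove A := ⟨r, fun ρ hρ => le_of_not_ge fun hrρ => hr (hmono hrρ hρ)⟩
  set R := sSup A
  have hR0 : 0 ≤ R := le_csSup hbdd h0
  have hRA : R ∈ A := by
    rcases hR0.eq_or_lt with hR | hR
    · rwa [← hR]
    refine h.isCompact_closedBall_of_forall_lt hR fun ρ hρ => ?_
    obtain ⟨ρ', hρ', hlt⟩ := exists_lt_of_lt_csSup ⟨0, h0⟩ hρ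
    exact hmono hlt.le hρ'
  obtain ⟨δ, hδ, hδA⟩ := h.exists_isCompact_closedBall_add hR0 hRA
  linarith [le_csSup hbdd hδA]

end IsGeodesicMetricSpace

end Geodesics

section LocalIsometry

variable {E X : Type*} [MetricSpace E] [MetricSpace X]

def IsLocalIsometry (p : E → X) : Prop :=
  ∀ x : E, ∃ ε > (0 : ℝ), ∀ y ∈ ball x ε, ∀ z ∈ ball x ε, dist (p y) (p z) = dist y z

namespace IsLocalIsometry

variable {p : E → X} (hp : IsLocalIsometry p)
include hp

theorem eventually_dist_eq (x : E) : ∀ᶠ y in 𝓝 x, dist (p x) (p y) = dist x y := by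
  obtain ⟨ε, hε, h⟩ := hp x
  filter_upwards [ball_mem_nhds x hε] with y hy using h x (mem_ball_self hε) y hy

protected theorem continuous : Continuous p := by
  refine continuous_iff_continuousAt.2 fun x => tendsto_iff_dist_tendsto_zero.2 ?_
  refine (tendsto_iff_dist_tendsto_zero.1 tendsto_id).congr' ?_
  filter_upwards [hp.eventually_dist_eq x] with y hy
  rw [id, dist_comm, ← hy, dist_comm]

theorem eventually_right_dist_comp_eq {f : ℝ → E} {a b u : ℝ} (hf : ContinuousOn f (Icc a b))
    (hu : u ∈ Ico a b) :
    ∀ᶠ t in 𝓝[>] u, t ∈ Icc a b ∧ dist (p (f u)) (p (f t)) = dist (f u) (f t) := by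
  have hIcc : Icc a b ∈ 𝓝[>] u :=
    mem_of_superset (Ioo_mem_nhdsGT hu.2) (Ioo_subset_Icc_self.trans (Icc_subset_Icc_left hu.1))
  have hf_tendsto : Tendsto f (𝓝[>] u) (𝓝 (f u)) :=
    ((hf u (Ico_subset_Icc_self hu)).mono_of_mem_nhdsWithin hIcc).tendsto
  exact Filter.Eventually.and hIcc (hf_tendsto.eventually (hp.eventually_dist_eq (f u)))

theorem lipschitzWith_one (hE : IsGeodesicMetricSpace E) : LipschitzWith 1 p := by
  refine LipschitzWith.of_dist_le_mul fun x y => ?_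
  obtain ⟨γ, hγ0, hγ1, hγ⟩ := hE x y
  have hloc : ∀ u ∈ Ico 0 (dist x y),
      ∀ᶠ t in 𝓝[>] u, dist (p (γ u)) (p (γ t)) ≤ 1 * (t - u) := fun u hu => by
    filter_upwards [hp.eventually_right_dist_comp_eq hγ.continuousOn hu, self_mem_nhdsWithin]
      with t ⟨ht, hdist⟩ (hut : u < t)
    rw [hdist, hγ u (Ico_subset_Icc_self hu) t ht, abs_of_neg (by linarith)]
    linarith
  simpa [hγ0, hγ1] using dist_le_mul_sub_of_eventually_right (f := p ∘ γ)
    (hp.continuous.comp_continuousOn hγ.continuousOn) hloc _ ⟨dist_nonneg, le_rfl⟩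

theorem exists_dist_le_of_isCoveringMap (hcov : IsCoveringMap p) (hX : IsGeodesicMetricSpace X)
    (z : E) (q : X) : ∃ u, p u = q ∧ dist z u ≤ dist (p z) q := by
  obtain ⟨σ, hσ0, hσ1, hσ⟩ := hX (p z) q
  set D := dist (p z) q
  have hD : 0 ≤ D := dist_nonneg
  have hscale : ∀ t ∈ Icc (0 : ℝ) 1, D * t ∈ Icc 0 D := fun t ht =>
    ⟨mul_nonneg hD ht.1, mul_le_of_le_one_right hD ht.2⟩
  let c : C(unitInterval, X) :=
    ⟨fun t => σ (D * t), hσ.continuousOn.comp_continuous (by fun_prop) fun t => hscale t t.2⟩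
  let Γ := hcov.liftPath c z (by simp [c, hσ0])
  let F : ℝ → E := IccExtend zero_le_one Γ
  have hF : Continuous F := Γ.continuous.Icc_extend'
  have hpF : ∀ t ∈ Icc (0 : ℝ) 1, p (F t) = σ (D * t) := fun t ht => by
    simp only [F, IccExtend_of_mem _ _ ht]
    exact congrFun (hcov.liftPath_lifts c z _) ⟨t, ht⟩
  have hloc : ∀ u ∈ Ico (0 : ℝ) 1,
      ∀ᶠ t in 𝓝[>] u, dist (F u) (F t) ≤ D * (t - u) := fun u hu => by
    filter_upwards [hp.eventually_right_dist_comp_eq hF.continuousOn hu, self_mem_nhdsWithin]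
      with t ⟨ht, hdist⟩ (hut : u < t)
    have hu' := Ico_subset_Icc_self hu
    rw [← hdist, hpF u hu', hpF t ht, hσ _ (hscale u hu') _ (hscale t ht), ← mul_sub,
      abs_mul, abs_of_nonneg hD, abs_of_neg (by linarith)]
    linarith
  refine ⟨F 1, by rw [hpF 1 ⟨zero_le_one, le_rfl⟩, mul_one, hσ1], ?_⟩
  simpa [F, Γ, hcov.liftPath_zero] using
    dist_le_mul_sub_of_eventually_right hF.continuousOn hloc 1 ⟨zero_le_one, le_rfl⟩

theorem weaklyLocallyCompactSpace [CompleteSpace E] [WeaklyLocallyCompactSpace X] :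
    WeaklyLocallyCompactSpace E := by
  refine ⟨fun x => ?_⟩
  obtain ⟨ε, hε, hiso⟩ := hp x
  obtain ⟨r, hr, hK⟩ := exists_isCompact_closedBall (p x)
  set ρ := min (ε / 2) r
  have hρ : 0 < ρ := lt_min (half_pos hε) hr
  have hsub : closedBall x ρ ⊆ ball x ε :=
    closedBall_subset_ball (by linarith [min_le_left (ε / 2) r])
  refine ⟨closedBall x ρ, ?_, closedBall_mem_nhds x hρ⟩
  have hpB : Isometry fun y : closedBall x ρ => p y :=
    Isometry.of_dist_eq fun y z => hiso y (hsub y.2) z (hsub z.2)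
  have htb : TotallyBounded (univ : Set (closedBall x ρ)) := by
    refine (totallyBounded_image_iff hpB.isUniformInducing).1 (hK.totallyBounded.subset ?_)
    rintro _ ⟨y, -, rfl⟩
    rw [mem_closedBall, hiso _ (hsub y.2) _ (mem_ball_self hε)]
    exact (mem_closedBall.1 y.2).trans (min_le_right _ _)
  rw [← Subtype.coe_image_univ (closedBall x ρ)]
  exact (htb.image uniformContinuous_subtype_val).isCompact_of_isClosed
    (by rw [Subtype.coe_image_univ]; exact isClosed_closedBall)

end IsLocalIsometry

end LocalIsometry

section GreedyGenerators

variable {G : Type*} [Group G] (ℓ : G → ℝ)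

-- An arbitrary element when `H = ⊤`.
noncomputable def shortestOutside (H : Subgroup G) : G :=
  Classical.epsilon fun g => g ∉ H ∧ ∀ k ∉ H, ℓ g ≤ ℓ k

theorem shortestOutside_spec [Northcott ℓ] {H : Subgroup G} (hH : H ≠ ⊤) :
    shortestOutside ℓ H ∉ H ∧ ∀ k ∉ H, ℓ (shortestOutside ℓ H) ≤ ℓ k :=
  Classical.epsilon_spec <|
    Northcott.exists_min_image ℓ (H : Set G)ᶜ (SetLike.exists_not_mem_of_ne_top H hH)

noncomputable def greedySubgroup : ℕ → Subgroup G
  | 0 => ⊥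
  | n + 1 => greedySubgroup n ⊔ Subgroup.closure {shortestOutside ℓ (greedySubgroup n)}

noncomputable def greedyGenerator (n : ℕ) : G :=
  shortestOutside ℓ (greedySubgroup ℓ n)

theorem greedySubgroup_eq_closure (n : ℕ) :
    greedySubgroup ℓ n = Subgroup.closure (greedyGenerator ℓ '' Iio n) := by
  induction n with
  | zero => simp [greedySubgroup]
  | succ n ih =>
    change greedySubgroup ℓ n ⊔ Subgroup.closure {greedyGenerator ℓ n} = _
    rw [ih, ← Subgroup.closure_union, Iio_add_one_eq_Iic, ← Iio_insert, image_insert_eq,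
      insert_eq, union_comm]

theorem greedyGenerator_injective [Northcott ℓ] (h : ∀ n, greedySubgroup ℓ n ≠ ⊤) :
    Function.Injective (greedyGenerator ℓ) :=
  .of_lt_imp_ne fun i j hij heq => (shortestOutside_spec ℓ (h j)).1 <| by
    change greedyGenerator ℓ j ∈ greedySubgroup ℓ j
    rw [greedySubgroup_eq_closure]
    exact Subgroup.subset_closure ⟨i, hij, heq⟩

theorem exists_mem_greedySubgroup [Northcott ℓ] (h : ∀ n, greedySubgroup ℓ n ≠ ⊤) (k : G) :
    ∃ n, k ∈ greedySubgroup ℓ n := by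
  by_contra! hk
  exact (Northcott.finite_le (h := ℓ) (ℓ k)).not_infinite <|
    infinite_of_injective_forall_mem (greedyGenerator_injective ℓ h) fun n =>
      (shortestOutside_spec ℓ (h n)).2 k (hk n)

theorem exists_greedy_generators [Northcott ℓ] :
    ∃ (m : ℕ∞) (g : ℕ → G), (¬ Group.FG G → m = ⊤) ∧
      Subgroup.closure {h | ∃ i : ℕ, (i : ℕ∞) < m ∧ g i = h} = ⊤ ∧
      ∀ i : ℕ, (i : ℕ∞) < m → g i ∉ Subgroup.closure {h | ∃ j, j < i ∧ g j = h} ∧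
        ∀ k ∉ Subgroup.closure {h | ∃ j, j < i ∧ g j = h}, ℓ (g i) ≤ ℓ k := by
  classical
  have hspec (i : ℕ) (hi : greedySubgroup ℓ i ≠ ⊤) :
      greedyGenerator ℓ i ∉ Subgroup.closure (greedyGenerator ℓ '' Iio i) ∧
        ∀ k ∉ Subgroup.closure (greedyGenerator ℓ '' Iio i), ℓ (greedyGenerator ℓ i) ≤ ℓ k := by
    rw [← greedySubgroup_eq_closure]
    exact shortestOutside_spec ℓ hi
  by_cases hfin : ∃ n, greedySubgroup ℓ n = ⊤
  · have htop := Nat.find_spec hfin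
    rw [greedySubgroup_eq_closure] at htop
    refine ⟨Nat.find hfin, greedyGenerator ℓ,
      fun hnfg => (hnfg (Group.fg_iff.2 ⟨_, htop, (finite_Iio _).image _⟩)).elim, ?_,
      fun i hi => hspec i (Nat.find_min hfin (by exact_mod_cast hi))⟩
    simp only [Nat.cast_lt]
    exact htop
  · push Not at hfin
    refine ⟨⊤, greedyGenerator ℓ, fun _ => rfl, eq_top_iff.2 fun k _ => ?_,
      fun i _ => hspec i (hfin i)⟩
    obtain ⟨n, hn⟩ := exists_mem_greedySubgroup ℓ hfin k
    rw [greedySubgroup_eq_closure] at hn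
    refine Subgroup.closure_mono ?_ hn
    rintro _ ⟨j, -, rfl⟩
    exact ⟨j, ENat.natCast_lt_top j, rfl⟩

end GreedyGenerators

namespace UniversalCoverSetup

variable {N : Type} [MetricSpace N] {x0 : N} (S : UniversalCoverSetup N x0)

theorem isLocalIsometry : IsLocalIsometry S.proj := S.locIsom

theorem properSpace_cover [WeaklyLocallyCompactSpace N] : ProperSpace S.cover :=
  haveI := S.complete
  haveI := S.isLocalIsometry.weaklyLocallyCompactSpace
  S.geodesic.properSpace

theorem deck_apply_basept_injective : Function.Injective fun g => S.deck g S.basept := by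
  intro g g' h
  have hfix : S.deck (g'⁻¹ * g) S.basept = S.basept := by
    rw [map_mul, map_inv, IsometryEquiv.mul_apply]
    exact (S.deck g').symm_apply_eq.2 h
  exact (inv_mul_eq_one.1 (S.deck_free _ _ hfix)).symm

theorem northcott_len [ProperSpace S.cover] : Northcott S.len := by
  refine ⟨fun R => ?_⟩
  have hfiber : IsDiscrete (S.proj ⁻¹' {x0}) :=
    isDiscrete_iff_discreteTopology.2 (S.covering x0).1
  have hfin : (S.proj ⁻¹' {x0} ∩ closedBall S.basept R).Finite :=
    ((isCompact_closedBall _ _).inter_left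
      (isClosed_singleton.preimage S.covering.continuous)).finite (hfiber.mono inter_subset_left)
  refine Set.Finite.of_finite_image (hfin.subset ?_) S.deck_apply_basept_injective.injOn
  rintro _ ⟨g, hg, rfl⟩
  exact ⟨by simp [S.deck_proj, S.proj_base], mem_closedBall'.2 hg⟩

theorem len_inv_mul (a g : FundamentalGroup N x0) :
    S.len (a⁻¹ * g) = dist (S.deck a S.basept) (S.deck g S.basept) := by
  rw [len, ← (S.deck a).dist_eq, ← IsometryEquiv.mul_apply, ← map_mul, mul_inv_cancel_left]

theorem exists_isMinRepLift (g : FundamentalGroup N x0) : ∃ γt, S.IsMinRepLift g γt :=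
  S.geodesic _ _

theorem dist_proj_midpoint_eq (hN : IsGeodesicMetricSpace N) {H : Subgroup (FundamentalGroup N x0)}
    {g : FundamentalGroup N x0} (hg : g ∉ H) (hmin : ∀ k ∉ H, S.len g ≤ S.len k)
    {γt : ℝ → S.cover} (hγt : S.IsMinRepLift g γt) :
    dist (S.proj (γt 0)) (S.proj (γt (S.len g / 2))) = S.len g / 2 := by
  obtain ⟨hγ0, hγd, hγ⟩ := hγt
  set d := S.len g
  have hd : 0 ≤ d := dist_nonneg
  set m := γt (d / 2)
  have hmem : d / 2 ∈ Icc 0 d := ⟨by linarith, by linarith⟩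
  have h₁ : dist S.basept m = d / 2 := by
    rw [← hγ0, hγ 0 ⟨le_rfl, hd⟩ _ hmem, zero_sub, abs_neg, abs_of_nonneg (by linarith)]
  have h₂ : dist m (S.deck g S.basept) = d / 2 := by
    rw [← hγd, hγ _ hmem d ⟨hd, le_rfl⟩, abs_of_nonpos (by linarith)]
    ring
  rw [hγ0]
  refine le_antisymm ?_ (not_lt.1 fun hlt => ?_)
  · simpa [h₁] using (S.isLocalIsometry.lipschitzWith_one S.geodesic).dist_le_mul S.basept m
  obtain ⟨u, hu, hdu⟩ :=
    S.isLocalIsometry.exists_dist_le_of_isCoveringMap S.covering hN S.basept (S.proj m)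
  obtain ⟨a, ha⟩ := S.deck_transitive u m hu
  have hlen_a : S.len a < d := calc
      S.len a ≤ dist S.basept m + dist m (S.deck a S.basept) := dist_triangle _ _ _
      _ = d / 2 + dist S.basept u := by rw [h₁, ← ha, (S.deck a).dist_eq, dist_comm]
      _ < d := by linarith
  have hlen_b : S.len (a⁻¹ * g) < d := calc
      S.len (a⁻¹ * g) = dist (S.deck a S.basept) (S.deck g S.basept) := S.len_inv_mul a g
      _ ≤ dist (S.deck a S.basept) m + dist m (S.deck g S.basept) := dist_triangle _ _ _
      _ = dist S.basept u + d / 2 := by rw [h₂, ← ha, (S.deck a).dist_eq]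
      _ < d := by linarith
  have hsplit : a ∉ H ∨ a⁻¹ * g ∉ H := by
    by_contra! h
    exact hg (mul_inv_cancel_left a g ▸ H.mul_mem h.1 h.2)
  rcases hsplit with h | h
  · exact (hmin a h).not_gt hlen_a
  · exact (hmin _ h).not_gt hlen_b

end UniversalCoverSetup

theorem halfway_lemma_general
    (n : ℕ) (N : Type) [MetricSpace N]
    [ChartedSpace (EuclideanSpace ℝ (Fin n)) N] (hgeo : IsGeodesicMetricSpace N)
    (x0 : N) (S : UniversalCoverSetup N x0) :
    ∃ (m : ℕ∞) (g : ℕ → FundamentalGroup N x0),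
      (¬ Group.FG (FundamentalGroup N x0) → m = ⊤) ∧
      Subgroup.closure {h | ∃ i : ℕ, (i : ℕ∞) < m ∧ g i = h} = ⊤ ∧
      (∀ i : ℕ, (i : ℕ∞) < m →
        g i ∉ Subgroup.closure {h | ∃ j : ℕ, j < i ∧ g j = h}) ∧
      (∀ i : ℕ, (i : ℕ∞) < m → ∃ γt : ℝ → S.cover, S.IsMinRepLift (g i) γt ∧
        dist (S.proj (γt 0)) (S.proj (γt (S.len (g i) / 2))) = S.len (g i) / 2) := by
  have := ChartedSpace.locallyCompactSpace (EuclideanSpace ℝ (Fin n)) N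
  have := S.properSpace_cover
  have := S.northcott_len
  obtain ⟨m, g, hfg, hgen, hmin⟩ := exists_greedy_generators S.len
  refine ⟨m, g, hfg, hgen, fun i hi => (hmin i hi).1, fun i hi => ?_⟩
  obtain ⟨γt, hγt⟩ := S.exists_isMinRepLift (g i)
  exact ⟨γt, hγt, S.dist_proj_midpoint_eq hgeo (hmin i hi).1 (hmin i hi).2 hγt⟩

/-- **Halfway Lemma.**  Let `N` be a complete Riemannian manifold with base point `x0`.
Then there is an ordered set (finite of size `m`, or an infinite sequence; infinite
whenever `π₁(N,x0)` is infinitely generated) of independent generators `g_1, g_2, …` of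
`π₁(N, x0)` having minimal representative geodesic loops `γ_k = proj ∘ γ̃_k` of length
`d_k = d_Ñ(x̃0, g_k x̃0)` which are halfway minimal: `d_N(γ_k(0), γ_k(d_k/2)) = d_k/2`. -/
theorem halfway_lemma
    (n : ℕ) (N : Type) [MetricSpace N]
    [ChartedSpace (EuclideanSpace ℝ (Fin n)) N] [IsManifold (𝓡 n) (⊤ : ℕ∞) N]
    [CompleteSpace N] [PathConnectedSpace N] (hgeo : IsGeodesicMetricSpace N)
    (x0 : N) (S : UniversalCoverSetup N x0) :
    ∃ (m : ℕ∞) (g : ℕ → FundamentalGroup N x0),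
      (¬ Group.FG (FundamentalGroup N x0) → m = ⊤) ∧
      Subgroup.closure {h | ∃ i : ℕ, (i : ℕ∞) < m ∧ g i = h} = ⊤ ∧
      (∀ i : ℕ, (i : ℕ∞) < m →
        g i ∉ Subgroup.closure {h | ∃ j : ℕ, j < i ∧ g j = h}) ∧
      (∀ i : ℕ, (i : ℕ∞) < m → ∃ γt : ℝ → S.cover, S.IsMinRepLift (g i) γt ∧
        dist (S.proj (γt 0)) (S.proj (γt (S.len (g i) / 2))) = S.len (g i) / 2) :=
  halfway_lemma_general n N hgeo x0 S
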